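/- arXiv:1807.05458 — 3 statements merged into one kernel-verified Lean document; each statement's English description precedes it below -/
import Mathlib

section
/- Let A ⊆ ℝ be a dense subset, f : A → ℂ a bounded function, and suppose there exist continuous functions f₂, f₃ : ℝ → ℂ with f₂|_A = f² and f₃|_A = f³. Define f̃ : ℝ → ℂ by f̃(α) = f₃(α)/f₂(α) if f₂(α) ≠ 0 and f̃(α) = 0 otherwise. Then f̃ is continuous on ℝ and f̃|_A = f. -/
/-!
By density and continuity, `f₃ ^ 2 = f₂ ^ 3` on all of `ℝ`, and in any field `b ^ 2 = a ^ 3`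
forces `(b / a) ^ 2 = a` (also when `a = 0`, as `b / 0 = 0`). Hence `‖f₃ / f₂‖ = √‖f₂‖`, which
gives continuity of `f₃ / f₂` at the zeros of `f₂`; elsewhere it is a quotient of continuous
functions. The `if` in the statement agrees with plain division.
-/

open scoped Classical

open Filter Topology

theorem div_sq_eq_of_sq_eq_pow_three {K : Type*} [Field K] {a b : K} (h : b ^ 2 = a ^ 3) :
    (b / a) ^ 2 = a := by
  rcases eq_or_ne a 0 with rfl | ha
  · simp
  · rw [div_pow, h]
    field_simp

theorem pow_three_div_sq {K : Type*} [Field K] (a : K) : a ^ 3 / a ^ 2 = a := by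
  rcases eq_or_ne a 0 with rfl | ha
  · simp
  · field_simp

theorem continuous_div_of_sq_eq_pow_three {X 𝕜 : Type*} [TopologicalSpace X] [NormedField 𝕜]
    {p q : X → 𝕜} (hp : Continuous p) (hq : Continuous q) (h : ∀ x, q x ^ 2 = p x ^ 3) :
    Continuous fun x => q x / p x := by
  have hnorm : ∀ x, ‖q x / p x‖ = √‖p x‖ := fun x => by
    have hsq := congrArg norm (div_sq_eq_of_sq_eq_pow_three (h x))
    rw [norm_pow] at hsq
    rw [← hsq, Real.sqrt_sq (norm_nonneg _)]
  refine continuous_iff_continuousAt.2 fun x => ?_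
  rcases eq_or_ne (p x) 0 with hx | hx
  · have hsqrt : Tendsto (fun y => √‖p y‖) (𝓝 x) (𝓝 0) := by
      simpa [hx] using (hp.norm.sqrt).tendsto x
    simpa [ContinuousAt, hx, tendsto_zero_iff_norm_tendsto_zero, hnorm] using hsqrt
  · exact hq.continuousAt.div hp.continuousAt hx

theorem stmt_6_general (A : Set ℝ) (hA : Dense A) (f f₂ f₃ : ℝ → ℂ)
    (h₂ : Continuous f₂) (h₃ : Continuous f₃)
    (hf₂ : ∀ x ∈ A, f₂ x = (f x) ^ 2) (hf₃ : ∀ x ∈ A, f₃ x = (f x) ^ 3) :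
    Continuous (fun α => if f₂ α = 0 then 0 else f₃ α / f₂ α) ∧
      ∀ x ∈ A, (if f₂ x = 0 then 0 else f₃ x / f₂ x) = f x := by
  have hite : ∀ x, (if f₂ x = 0 then 0 else f₃ x / f₂ x) = f₃ x / f₂ x := fun x => by
    split_ifs with hx <;> simp [hx]
  have hcusp : ∀ x, f₃ x ^ 2 = f₂ x ^ 3 := congrFun <|
    Continuous.ext_on hA (h₃.pow 2) (h₂.pow 3) fun x hx => by
      simp only [hf₂ x hx, hf₃ x hx]; ring
  simp only [hite]
  exact ⟨continuous_div_of_sq_eq_pow_three h₂ h₃ hcusp,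
    fun x hx => by rw [hf₂ x hx, hf₃ x hx, pow_three_div_sq]⟩

theorem stmt_6 (A : Set ℝ) (hA : Dense A) (f f₂ f₃ : ℝ → ℂ)
    (hbd : ∃ M : ℝ, ∀ x ∈ A, ‖f x‖ ≤ M)
    (h₂ : Continuous f₂) (h₃ : Continuous f₃)
    (hf₂ : ∀ x ∈ A, f₂ x = (f x) ^ 2) (hf₃ : ∀ x ∈ A, f₃ x = (f x) ^ 3) :
    Continuous (fun α => if f₂ α = 0 then 0 else f₃ α / f₂ α) ∧
      ∀ x ∈ A, (if f₂ x = 0 then 0 else f₃ x / f₂ x) = f x :=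
  stmt_6_general A hA f f₂ f₃ h₂ h₃ hf₂ hf₃
end

section
/- Let G : P₋ → ℂ be holomorphic on the lower half-plane and suppose there is C > 0 such that |G'(x+iy)| ≤ C for all x ∈ ℝ, y < 0. Suppose further that G(iy) → 0 as y → 0⁻. Then for every δ > 0, lim_{y → 0⁻} ∫_{-δ}^{δ} 1/|G(s+iy)|² ds = ∞, provided G(s+iy) ≠ 0 on the relevant strip so the integrand is defined (interpreting 1/|G|² = +∞ where G = 0). -/
/-!
By the mean value theorem on the convex lower half-plane, `G` is `C`-Lipschitz there, so
`‖G (s + iy)‖ ≤ ‖G (iy)‖ + C |s|`. Once `‖G (iy)‖ ≤ C t`, the integrand is at least `(3 C t)⁻²`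
on `(t, 2t)`, so the integral is at least `1 / (9 C² t)`; letting `t → 0` gives the blow-up.
-/

open Filter Set MeasureTheory Topology

lemma measure_div_le_setLIntegral_inv_sq_norm {X E : Type*} [MeasurableSpace X]
    [NormedAddCommGroup E] (μ : Measure X) {f : X → E} {S : Set X} (hS : MeasurableSet S)
    {M : ℝ} (hf : ∀ x ∈ S, ‖f x‖ ≤ M) :
    μ S / ENNReal.ofReal (M ^ 2) ≤ ∫⁻ x in S, (ENNReal.ofReal (‖f x‖ ^ 2))⁻¹ ∂μ := by
  rw [ENNReal.div_eq_inv_mul, ← setLIntegral_const]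
  refine setLIntegral_mono' hS fun x hx => ENNReal.inv_le_inv.mpr (ENNReal.ofReal_le_ofReal ?_)
  exact pow_le_pow_left₀ (norm_nonneg _) (hf x hx) 2

theorem tendsto_setLIntegral_inv_sq_norm_nhds_top {α E : Type*} [NormedAddCommGroup E]
    {l : Filter α} {F : α → ℝ → E} {a : α → ℝ} {C δ : ℝ} (hC : 0 < C) (hδ : 0 < δ)
    (ha : Tendsto a l (𝓝 0)) (hF : ∀ᶠ y in l, ∀ s ∈ Ioo (-δ) δ, ‖F y s‖ ≤ a y + C * |s|) :
    Tendsto (fun y => ∫⁻ s in Ioo (-δ) δ, (ENNReal.ofReal (‖F y s‖ ^ 2))⁻¹) l (𝓝 ⊤) := by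
  refine ENNReal.tendsto_nhds_top fun n => ?_
  have hlarge : Tendsto (fun t : ℝ => (9 * C ^ 2)⁻¹ * t⁻¹) (𝓝[>] 0) atTop :=
    tendsto_inv_nhdsGT_zero.const_mul_atTop (by positivity)
  obtain ⟨t, htn, ht, htδ⟩ :=
    ((hlarge.eventually_gt_atTop (n : ℝ)).and (Ioo_mem_nhdsGT (half_pos hδ))).exists
  filter_upwards [hF, ha (Iic_mem_nhds (mul_pos hC ht))] with y hFy hay
  have hbound : ∀ s ∈ Ioo t (2 * t), ‖F y s‖ ≤ 3 * C * t := by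
    rintro s ⟨hts, hst⟩
    calc ‖F y s‖ ≤ a y + C * |s| := hFy s ⟨by linarith, by linarith⟩
      _ ≤ C * t + C * (2 * t) := by
        rw [abs_of_pos (ht.trans hts)]; gcongr; exact hay
      _ = 3 * C * t := by ring
  calc (n : ENNReal) < ENNReal.ofReal t / ENNReal.ofReal ((3 * C * t) ^ 2) := by
        rw [← ENNReal.ofReal_div_of_pos (by positivity), ENNReal.natCast_lt_ofReal]
        exact htn.trans_eq (by field_simp; ring)
    _ = volume (Ioo t (2 * t)) / ENNReal.ofReal ((3 * C * t) ^ 2) := by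
        rw [Real.volume_Ioo]; ring_nf
    _ ≤ ∫⁻ s in Ioo t (2 * t), (ENNReal.ofReal (‖F y s‖ ^ 2))⁻¹ :=
        measure_div_le_setLIntegral_inv_sq_norm _ measurableSet_Ioo hbound
    _ ≤ ∫⁻ s in Ioo (-δ) δ, (ENNReal.ofReal (‖F y s‖ ^ 2))⁻¹ :=
        lintegral_mono_set fun s hs => ⟨by linarith [hs.1], by linarith [hs.2]⟩

theorem stmt_7 (G : ℂ → ℂ) (hG : DifferentiableOn ℂ G {z : ℂ | z.im < 0})
    (C : ℝ) (hC : 0 < C)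
    (hG' : ∀ x : ℝ, ∀ y < (0:ℝ), ‖deriv G (↑x + ↑y * Complex.I)‖ ≤ C)
    (h0 : Tendsto (fun y : ℝ => G (↑y * Complex.I)) (nhdsWithin 0 (Iio 0)) (nhds 0)) :
    ∀ δ > (0:ℝ), Tendsto (fun y : ℝ =>
        ∫⁻ s in Ioo (-δ) δ, (ENNReal.ofReal (‖G (↑s + ↑y * Complex.I)‖ ^ 2))⁻¹)
      (nhdsWithin 0 (Iio 0)) (nhds ⊤) := by
  intro δ hδ
  have hLipschitz : ∀ z w : ℂ, z.im < 0 → w.im < 0 → ‖G w - G z‖ ≤ C * ‖w - z‖ :=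
    fun z w hz hw => (convex_halfSpace_im_lt 0).norm_image_sub_le_of_norm_deriv_le
      (fun u hu => hG.differentiableAt
        ((isOpen_lt Complex.continuous_im continuous_const).mem_nhds hu))
      (fun u hu => by simpa only [Complex.re_add_im] using hG' u.re u.im hu) hz hw
  refine tendsto_setLIntegral_inv_sq_norm_nhds_top hC hδ (by simpa using h0.norm) ?_
  filter_upwards [self_mem_nhdsWithin] with y (hy : y < 0) s _
  calc ‖G (s + y * Complex.I)‖
      ≤ ‖G (y * Complex.I)‖ + ‖G (s + y * Complex.I) - G (y * Complex.I)‖ := norm_le_insert' _ _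
    _ ≤ ‖G (y * Complex.I)‖ + C * |s| := by
      gcongr
      simpa using
        hLipschitz (y * Complex.I) (s + y * Complex.I) (by simpa using hy) (by simpa using hy)
end

section
/- Let z : ℝ × [0,T] → ℂ satisfy: z(·,0) is absolutely continuous with derivative Z_{,α'}(·,0) ∈ L¹_loc, and for all t ∈ [0,T] and α < β, ||z(α,t) - z(β,t)| - |z(α,0) - z(β,0)|| ≤ tC ∫_α^β |Z_{,α'}(γ,0)| dγ for some constant C > 0. Suppose the initial curve satisfies the chord-arc condition δ∫_α^β |Z_{,α'}(γ,0)| dγ ≤ |z(α,0) - z(β,0)| for some 0 < δ < 1 and all α < β. Then for all t ∈ [0, min(T, δ/(2C))] and all α < β, (δ/2)∫_α^β |Z_{,α'}(γ,0)| dγ ≤ |z(α,t) - z(β,t)| ≤ 2∫_α^β |Z_{,α'}(γ,0)| dγ. In particular z(·,t) is injective and absolutely continuous. -/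
/-!
For `t ≤ δ / (2C)` the perturbation `t C ∫_α^β |Z'|` of the chord length is at most half of the
initial chord-arc lower bound `δ ∫_α^β |Z'|`, so half of that bound survives; the upper bound grows
from `∫_α^β |Z'|` to at most `(1 + δ/2) ∫_α^β |Z'|`. Injectivity follows: equal points at time `t`
force `∫_α^β |Z'| = 0`, hence equal points at time `0`.
-/

open Set

theorem half_mul_le_and_le_two_mul_of_abs_sub_le {d d₀ I ε δ : ℝ} (hd : |d - d₀| ≤ ε * I)
    (hlow : δ * I ≤ d₀) (hup : d₀ ≤ I) (hI : 0 ≤ I) (hε : ε ≤ δ / 2) (hδ : δ ≤ 2) :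
    δ / 2 * I ≤ d ∧ d ≤ 2 * I := by
  have hεI : ε * I ≤ δ / 2 * I := mul_le_mul_of_nonneg_right hε hI
  have hδI : δ / 2 * I ≤ I := mul_le_of_le_one_left hI (by linarith)
  obtain ⟨hd_low, hd_up⟩ := abs_le.mp hd
  constructor <;> linarith

theorem Function.injective_of_mul_le_norm_sub {α E F : Type*} [LinearOrder α]
    [NormedAddCommGroup E] [NormedAddCommGroup F] {f : α → E} {g : α → F} {L : α → α → ℝ}
    {c : ℝ} (hc : 0 < c) (hg : Function.Injective g)
    (hgL : ∀ a b, a ≤ b → ‖g a - g b‖ ≤ L a b) (hfL : ∀ a b, a ≤ b → c * L a b ≤ ‖f a - f b‖) :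
    Function.Injective f := by
  intro a b hab
  wlog h : a ≤ b generalizing a b
  · exact (this hab.symm (le_of_not_ge h)).symm
  have hL : L a b ≤ 0 := by
    have := hfL a b h
    rw [hab, sub_self, norm_zero] at this
    exact nonpos_of_mul_nonpos_left (by rwa [mul_comm]) hc
  exact hg (norm_sub_eq_zero_iff.mp (le_antisymm ((hgL a b h).trans hL) (norm_nonneg _)))

theorem stmt_14_general (T C δ : ℝ) (hC : 0 < C) (hδ₀ : 0 < δ) (hδ₁ : δ < 1)
    (z : ℝ → ℝ → ℂ) (Z' : ℝ → ℂ)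
    (hpert : ∀ t ∈ Icc 0 T, ∀ α β : ℝ, α ≤ β →
      |‖z α t - z β t‖ - ‖z α 0 - z β 0‖| ≤ t * C * ∫ γ in α..β, ‖Z' γ‖)
    (hca : ∀ α β : ℝ, α ≤ β →
      δ * (∫ γ in α..β, ‖Z' γ‖) ≤ ‖z α 0 - z β 0‖ ∧
        ‖z α 0 - z β 0‖ ≤ ∫ γ in α..β, ‖Z' γ‖)
    (hinj : Function.Injective fun α => z α 0) :
    ∀ t ∈ Icc 0 (min T (δ / (2 * C))),
      (∀ α β : ℝ, α ≤ β →
        (δ / 2) * (∫ γ in α..β, ‖Z' γ‖) ≤ ‖z α t - z β t‖ ∧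
          ‖z α t - z β t‖ ≤ 2 * ∫ γ in α..β, ‖Z' γ‖) ∧
      Function.Injective fun α => z α t := by
  rintro t ⟨ht₀, ht⟩
  have htC : t * C ≤ δ / 2 := by
    have := (le_div_iff₀ (by positivity : (0 : ℝ) < 2 * C)).mp (ht.trans (min_le_right _ _))
    linarith
  have bounds : ∀ α β : ℝ, α ≤ β →
      (δ / 2) * (∫ γ in α..β, ‖Z' γ‖) ≤ ‖z α t - z β t‖ ∧
        ‖z α t - z β t‖ ≤ 2 * ∫ γ in α..β, ‖Z' γ‖ := fun α β hαβ =>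
    half_mul_le_and_le_two_mul_of_abs_sub_le
      (hpert t ⟨ht₀, ht.trans (min_le_left _ _)⟩ α β hαβ) (hca α β hαβ).1 (hca α β hαβ).2
      (intervalIntegral.integral_nonneg hαβ fun _ _ => norm_nonneg _) htC (by linarith)
  exact ⟨bounds, Function.injective_of_mul_le_norm_sub (half_pos hδ₀) hinj
    (fun α β hαβ => (hca α β hαβ).2) (fun α β hαβ => (bounds α β hαβ).1)⟩

theorem stmt_14 (T C δ : ℝ) (hT : 0 ≤ T) (hC : 0 < C) (hδ₀ : 0 < δ) (hδ₁ : δ < 1)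
    (z : ℝ → ℝ → ℂ) (Z' : ℝ → ℂ)
    (hloc : MeasureTheory.LocallyIntegrable Z' MeasureTheory.volume)
    (hpert : ∀ t ∈ Icc 0 T, ∀ α β : ℝ, α ≤ β →
      |‖z α t - z β t‖ - ‖z α 0 - z β 0‖| ≤ t * C * ∫ γ in α..β, ‖Z' γ‖)
    (hca : ∀ α β : ℝ, α ≤ β →
      δ * (∫ γ in α..β, ‖Z' γ‖) ≤ ‖z α 0 - z β 0‖ ∧
        ‖z α 0 - z β 0‖ ≤ ∫ γ in α..β, ‖Z' γ‖)
    (hinj : Function.Injective fun α => z α 0) :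
    ∀ t ∈ Icc 0 (min T (δ / (2 * C))),
      (∀ α β : ℝ, α ≤ β →
        (δ / 2) * (∫ γ in α..β, ‖Z' γ‖) ≤ ‖z α t - z β t‖ ∧
          ‖z α t - z β t‖ ≤ 2 * ∫ γ in α..β, ‖Z' γ‖) ∧
      Function.Injective fun α => z α t :=
  stmt_14_general T C δ hC hδ₀ hδ₁ z Z' hpert hca hinj
end
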